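/- Let Ω ⊂ ℝ^d be compact with Borel probability measure ρ, and let f, gₙ : Ω → ℝ be measurable and bounded. For every 1 ≤ p, q < ∞, Wass_p(f_*ρ, (gₙ)_*ρ)^{p+q} ≤ C(Ω,p,q) · ‖f − gₙ‖_{L^q(Ω,ρ)}^q · ‖f − gₙ‖_{L^∞(Ω)}^p for some constant C depending only on Ω, p, q. -/

import Mathlib

open MeasureTheory Set
open scoped ENNReal

/-- A coupling of two measures on ℝ: a measure on ℝ × ℝ with the prescribed marginals. -/
def IsCoupling (γ : Measure (ℝ × ℝ)) (μ ν : Measure ℝ) : Prop :=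
  γ.map Prod.fst = μ ∧ γ.map Prod.snd = ν

/-- The Wasserstein-p distance between two Borel measures on ℝ. -/
noncomputable def Wass (p : ℝ) (μ ν : Measure ℝ) : ℝ :=
  sInf {w : ℝ | ∃ γ : Measure (ℝ × ℝ), IsCoupling γ μ ν ∧
    w = (∫ z : ℝ × ℝ, |z.1 - z.2| ^ p ∂γ) ^ (1 / p)}

/-- The sup norm of a function over a set Ω. -/
noncomputable def supNormOn {X : Type*} (Ω : Set X) (h : X → ℝ) : ℝ :=
  sSup ((fun x => |h x|) '' Ω)

/-!
The pair `(f, gₙ)` pushes `ρ` forward to a coupling of `f_*ρ` and `(gₙ)_*ρ`, so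
`Wass_p^p ≤ ∫ |h|^p` with `h = f - gₙ`. It remains to interpolate the `p`-th moment of the
bounded function `h` between its `q`-th moment and its sup norm `S`: writing
`(∫ |h|^p)^((p+q)/p) = (∫ |h|^p) · (∫ |h|^p)^(q/p)`, one uses `|h|^p ≤ S^(p-q) |h|^q` if
`q ≤ p`, and Jensen's inequality for the convex map `t ↦ t^(q/p)` if `p ≤ q`.
-/

section Moments

variable {X : Type*} [MeasurableSpace X] {μ : Measure X} {f : X → ℝ} {p q r S : ℝ}

lemma integrable_abs_rpow_of_ae_abs_le [IsFiniteMeasure μ] (hf : AEMeasurable f μ) (hr : 0 ≤ r)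
    (hS : ∀ᵐ x ∂μ, |f x| ≤ S) : Integrable (fun x => |f x| ^ r) μ := by
  refine Integrable.of_bound (hf.abs.pow_const r).aestronglyMeasurable (S ^ r) ?_
  filter_upwards [hS] with x hx
  rw [Real.norm_of_nonneg (by positivity)]
  exact Real.rpow_le_rpow (abs_nonneg _) hx hr

lemma integral_abs_rpow_le_of_ae_abs_le [IsProbabilityMeasure μ] (hr : 0 ≤ r)
    (hS : ∀ᵐ x ∂μ, |f x| ≤ S) : ∫ x, |f x| ^ r ∂μ ≤ S ^ r := by
  have hle : ∫ x, |f x| ^ r ∂μ ≤ ∫ _x, S ^ r ∂μ := by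
    refine integral_mono_of_nonneg (.of_forall fun x => by positivity) (integrable_const _) ?_
    filter_upwards [hS] with x hx
    exact Real.rpow_le_rpow (abs_nonneg _) hx hr
  simpa using hle

lemma integral_abs_rpow_le_rpow_mul_of_le [IsFiniteMeasure μ] (hf : AEMeasurable f μ)
    (hq : 0 < q) (hqp : q ≤ p) (hS : ∀ᵐ x ∂μ, |f x| ≤ S) :
    ∫ x, |f x| ^ p ∂μ ≤ S ^ (p - q) * ∫ x, |f x| ^ q ∂μ := by
  rw [← integral_const_mul]
  refine integral_mono_of_nonneg (.of_forall fun x => by positivity)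
    ((integrable_abs_rpow_of_ae_abs_le hf hq.le hS).const_mul _) ?_
  filter_upwards [hS] with x hx
  calc |f x| ^ p = |f x| ^ (p - q) * |f x| ^ q := by
        rw [← Real.rpow_add' (abs_nonneg _) (by linarith), sub_add_cancel]
    _ ≤ S ^ (p - q) * |f x| ^ q := by gcongr

lemma rpow_integral_abs_rpow_le_of_le [IsProbabilityMeasure μ] (hf : AEMeasurable f μ)
    (hp : 0 < p) (hpq : p ≤ q) (hS : ∀ᵐ x ∂μ, |f x| ≤ S) :
    (∫ x, |f x| ^ p ∂μ) ^ (q / p) ≤ ∫ x, |f x| ^ q ∂μ := by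
  have hpow : ∀ x, (|f x| ^ p) ^ (q / p) = |f x| ^ q := fun x => by
    rw [← Real.rpow_mul (abs_nonneg _), mul_div_cancel₀ _ hp.ne']
  have hjensen := (convexOn_rpow ((one_le_div hp).2 hpq)).map_integral_le
    (Real.continuous_rpow_const (div_nonneg (hp.le.trans hpq) hp.le)).continuousOn isClosed_Ici
    (.of_forall fun x => Set.mem_Ici.2 (by positivity))
    (integrable_abs_rpow_of_ae_abs_le hf hp.le hS)
    (by simpa only [Function.comp_def, hpow]
      using integrable_abs_rpow_of_ae_abs_le hf (hp.le.trans hpq) hS)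
  simpa only [hpow] using hjensen

theorem rpow_integral_abs_rpow_le_integral_mul [IsProbabilityMeasure μ] (hf : AEMeasurable f μ)
    (hp : 0 < p) (hq : 0 < q) (hS : ∀ᵐ x ∂μ, |f x| ≤ S) :
    ((∫ x, |f x| ^ p ∂μ) ^ (1 / p)) ^ (p + q) ≤ (∫ x, |f x| ^ q ∂μ) * S ^ p := by
  set Ip := ∫ x, |f x| ^ p ∂μ
  set Iq := ∫ x, |f x| ^ q ∂μ
  have hIp : 0 ≤ Ip := integral_nonneg fun x => by positivity
  have hIq : 0 ≤ Iq := integral_nonneg fun x => by positivity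
  have hS0 : 0 ≤ S := let ⟨x, hx⟩ := hS.exists; (abs_nonneg _).trans hx
  have hsplit : (Ip ^ (1 / p)) ^ (p + q) = Ip * Ip ^ (q / p) := by
    rw [← Real.rpow_mul hIp, show 1 / p * (p + q) = 1 + q / p by field_simp,
      Real.rpow_add' hIp (by positivity), Real.rpow_one]
  rw [hsplit]
  rcases le_total p q with hpq | hqp
  · calc Ip * Ip ^ (q / p) ≤ S ^ p * Iq :=
          mul_le_mul (integral_abs_rpow_le_of_ae_abs_le hp.le hS)
            (rpow_integral_abs_rpow_le_of_le hf hp hpq hS) (by positivity) (by positivity)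
      _ = Iq * S ^ p := mul_comm _ _
  · have hIpq : Ip ^ (q / p) ≤ S ^ q := by
      calc Ip ^ (q / p) ≤ (S ^ p) ^ (q / p) := by
            gcongr
            exact integral_abs_rpow_le_of_ae_abs_le hp.le hS
        _ = S ^ q := by rw [← Real.rpow_mul hS0, mul_div_cancel₀ _ hp.ne']
    calc Ip * Ip ^ (q / p) ≤ (S ^ (p - q) * Iq) * S ^ q :=
          mul_le_mul (integral_abs_rpow_le_rpow_mul_of_le hf hq hqp hS) hIpq (by positivity)
            (by positivity)
      _ = Iq * S ^ p := by
          rw [mul_comm (S ^ (p - q)) Iq, mul_assoc,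
            ← Real.rpow_add' hS0 (by linarith), sub_add_cancel]

end Moments

lemma isCoupling_map_prodMk {X : Type*} [MeasurableSpace X] {μ : Measure X} {f g : X → ℝ}
    (hf : AEMeasurable f μ) (hg : AEMeasurable g μ) :
    IsCoupling (μ.map fun x => (f x, g x)) (μ.map f) (μ.map g) :=
  ⟨AEMeasurable.map_map_of_aemeasurable measurable_fst.aemeasurable (hf.prodMk hg),
    AEMeasurable.map_map_of_aemeasurable measurable_snd.aemeasurable (hf.prodMk hg)⟩

lemma Wass_nonneg (p : ℝ) (μ ν : Measure ℝ) : 0 ≤ Wass p μ ν :=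
  Real.sInf_nonneg fun _ ⟨_, _, hw⟩ =>
    hw ▸ Real.rpow_nonneg (integral_nonneg fun _ => by positivity) _

lemma Wass_map_le {X : Type*} [MeasurableSpace X] {μ : Measure X} {f g : X → ℝ}
    (hf : AEMeasurable f μ) (hg : AEMeasurable g μ) (p : ℝ) :
    Wass p (μ.map f) (μ.map g) ≤ (∫ x, |f x - g x| ^ p ∂μ) ^ (1 / p) := by
  refine csInf_le ⟨0, fun _ ⟨_, _, hw⟩ =>
    hw ▸ Real.rpow_nonneg (integral_nonneg fun _ => by positivity) _⟩
    ⟨_, isCoupling_map_prodMk hf hg, ?_⟩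
  rw [integral_map (hf.prodMk hg)
    (by fun_prop : Measurable fun z : ℝ × ℝ => |z.1 - z.2| ^ p).aestronglyMeasurable]

lemma abs_le_supNormOn {X : Type*} {Ω : Set X} {h : X → ℝ}
    (hbdd : BddAbove ((fun x => |h x|) '' Ω)) {x : X} (hx : x ∈ Ω) : |h x| ≤ supNormOn Ω h :=
  le_csSup hbdd (mem_image_of_mem _ hx)

theorem wasserstein_interpolation_general
    (d : ℕ) (Ω : Set (Fin d → ℝ))
    (p q : ℝ) (hp : 1 ≤ p) (hq : 1 ≤ q) :
    ∃ C : ℝ, 0 < C ∧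
      ∀ (ρ : Measure (Fin d → ℝ)), IsProbabilityMeasure ρ → ρ Ωᶜ = 0 →
      ∀ f gₙ : (Fin d → ℝ) → ℝ, Measurable f → Measurable gₙ →
        (∃ M : ℝ, ∀ x ∈ Ω, |f x| ≤ M) → (∃ M : ℝ, ∀ x ∈ Ω, |gₙ x| ≤ M) →
        Wass p (ρ.map f) (ρ.map gₙ) ^ (p + q) ≤
          C * (∫ α, |f α - gₙ α| ^ q ∂ρ) * supNormOn Ω (f - gₙ) ^ p := by
  refine ⟨1, one_pos, ?_⟩
  rintro ρ hρ hρΩ f g hf hg ⟨Mf, hMf⟩ ⟨Mg, hMg⟩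
  have hbdd : BddAbove ((fun x => |(f - g) x|) '' Ω) := by
    refine ⟨Mf + Mg, ?_⟩
    rintro _ ⟨x, hx, rfl⟩
    exact (abs_sub _ _).trans (add_le_add (hMf x hx) (hMg x hx))
  have hS : ∀ᵐ x ∂ρ, |f x - g x| ≤ supNormOn Ω (f - g) :=
    (ae_iff.2 hρΩ).mono fun _ hx => abs_le_supNormOn hbdd hx
  rw [one_mul]
  calc Wass p (ρ.map f) (ρ.map g) ^ (p + q)
      ≤ ((∫ x, |f x - g x| ^ p ∂ρ) ^ (1 / p)) ^ (p + q) :=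
        Real.rpow_le_rpow (Wass_nonneg _ _ _) (Wass_map_le hf.aemeasurable hg.aemeasurable p)
          (by linarith)
    _ ≤ (∫ x, |f x - g x| ^ q ∂ρ) * supNormOn Ω (f - g) ^ p :=
        rpow_integral_abs_rpow_le_integral_mul (hf.sub hg).aemeasurable (by linarith)
          (by linarith) hS

/-- For compact Ω ⊂ ℝ^d with Borel probability measure ρ, bounded
measurable f, gₙ and 1 ≤ p, q < ∞, there is C = C(Ω,p,q) with
Wass_p(f_*ρ, (gₙ)_*ρ)^{p+q} ≤ C ‖f − gₙ‖_{L^q(ρ)}^q ‖f − gₙ‖_{L^∞(Ω)}^p. -/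
theorem wasserstein_interpolation
    (d : ℕ) (Ω : Set (Fin d → ℝ)) (hΩc : IsCompact Ω) (hΩm : MeasurableSet Ω)
    (p q : ℝ) (hp : 1 ≤ p) (hq : 1 ≤ q) :
    ∃ C : ℝ, 0 < C ∧
      ∀ (ρ : Measure (Fin d → ℝ)), IsProbabilityMeasure ρ → ρ Ωᶜ = 0 →
      ∀ f gₙ : (Fin d → ℝ) → ℝ, Measurable f → Measurable gₙ →
        (∃ M : ℝ, ∀ x ∈ Ω, |f x| ≤ M) → (∃ M : ℝ, ∀ x ∈ Ω, |gₙ x| ≤ M) →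
        Wass p (ρ.map f) (ρ.map gₙ) ^ (p + q) ≤
          C * (∫ α, |f α - gₙ α| ^ q ∂ρ) * supNormOn Ω (f - gₙ) ^ p :=
  wasserstein_interpolation_general d Ω p q hp hq
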